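/- Let m > 0, t₀ ∈ ℝ, and u ∈ ℝ³ with ‖u‖ = 1. Define γ(ρ) := (t₀ + ρ − 2m·log(1 + ρ/(2m)), ρ·u) for ρ ∈ (0, ∞). Then for every ρ > 0 the velocity γ'(ρ) = (ρ/(ρ + 2m), u) satisfies Q_N(ρ/(ρ + 2m), u, ρ·u) = 0; i.e., the radial curves with dt/dρ = ρ/(ρ + 2m) are null curves of the negative-mass Schwarzschild metric. -/

import Mathlib

/-- The negative-mass Schwarzschild quadratic form with mass parameter `m > 0`,
evaluated on a velocity `(t', x')` at a point with spatial part `x ≠ 0`: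
`Q_N(t',x',x) := −(1 + 2m/‖x‖)·t'² + ‖x'‖² − (2m/((‖x‖ + 2m)·‖x‖²))·⟨x,x'⟩²`. -/
noncomputable def QN (m : ℝ) (t' : ℝ) (x' x : EuclideanSpace ℝ (Fin 3)) : ℝ :=
  -(1 + 2 * m / ‖x‖) * t' ^ 2 + ‖x'‖ ^ 2
    - (2 * m / ((‖x‖ + 2 * m) * ‖x‖ ^ 2)) * (inner ℝ x x' : ℝ) ^ 2

/-! Along a radial ray `ρ ↦ ρ • u` the form reduces to `ρ/(ρ + 2m) − ((ρ + 2m)/ρ)·t'²`, so the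
radial null directions have `dt/dρ = ρ/(ρ + 2m) = 1 − 2m/(ρ + 2m)`, whose primitive is
`ρ − 2m·log(1 + ρ/(2m))`. -/

theorem hasDerivAt_const_add_sub_mul_log_one_add_div (c : ℝ) {a ρ : ℝ} (ha : a ≠ 0)
    (hρa : ρ + a ≠ 0) :
    HasDerivAt (fun σ : ℝ => c + σ - a * Real.log (1 + σ / a)) (ρ / (ρ + a)) ρ := by
  have harg : 1 + ρ / a ≠ 0 := by
    rwa [one_add_div ha, add_comm, div_ne_zero_iff, and_iff_left ha]
  have hlog : HasDerivAt (fun σ : ℝ => Real.log (1 + σ / a)) (1 / a / (1 + ρ / a)) ρ :=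
    (((hasDerivAt_id ρ).div_const a).const_add 1).log harg
  refine (((hasDerivAt_id ρ).const_add c).sub (hlog.const_mul a)).congr_deriv ?_
  rw [one_add_div ha, add_comm a ρ]
  field_simp
  ring

theorem QN_smul_of_norm_eq_one (m t' : ℝ) {u : EuclideanSpace ℝ (Fin 3)} (hu : ‖u‖ = 1)
    {ρ : ℝ} (hρ : 0 < ρ) :
    QN m t' u (ρ • u) = -(1 + 2 * m / ρ) * t' ^ 2 + 1 - 2 * m / (ρ + 2 * m) := by
  have hnorm : ‖ρ • u‖ = ρ := by rw [norm_smul, hu, Real.norm_of_nonneg hρ.le, mul_one]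
  have hinner : inner ℝ (ρ • u) u = ρ := by
    rw [real_inner_smul_left, real_inner_self_eq_norm_sq, hu, one_pow, mul_one]
  rw [QN, hnorm, hinner, hu]
  field_simp

/-- Let `m > 0`, `t₀ ∈ ℝ`, and `u ∈ ℝ³` with `‖u‖ = 1`. Define
`γ(ρ) := (t₀ + ρ − 2m·log(1 + ρ/(2m)), ρ·u)` for `ρ ∈ (0, ∞)`. Then for every
`ρ > 0` the velocity `γ'(ρ) = (ρ/(ρ + 2m), u)` satisfies
`Q_N(ρ/(ρ + 2m), u, ρ·u) = 0`; i.e., the radial curves with `dt/dρ = ρ/(ρ + 2m)`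
are null curves of the negative-mass Schwarzschild metric. -/
theorem radial_null_curves_negative_mass (m : ℝ) (hm : 0 < m) (t₀ : ℝ)
    (u : EuclideanSpace ℝ (Fin 3)) (hu : ‖u‖ = 1)
    (ρ : ℝ) (hρ : 0 < ρ) :
    HasDerivAt
      (fun σ : ℝ => ((t₀ + σ - 2 * m * Real.log (1 + σ / (2 * m)), σ • u) :
        ℝ × EuclideanSpace ℝ (Fin 3)))
      (ρ / (ρ + 2 * m), u) ρ ∧
    QN m (ρ / (ρ + 2 * m)) u (ρ • u) = 0 := by
  have hsum : ρ + 2 * m ≠ 0 := by positivity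
  refine ⟨?_, ?_⟩
  · refine (hasDerivAt_const_add_sub_mul_log_one_add_div t₀ (by positivity) hsum).prodMk ?_
    simpa using (hasDerivAt_id ρ).smul_const u
  · rw [QN_smul_of_norm_eq_one m _ hu hρ]
    field_simp
    ring
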